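/- In a cop-win graph G of corner rank α, every vertex of corner rank k > 1 has at least one neighbor of corner rank k−1. In particular, if for some k < α there is exactly one vertex v of corner rank k, then v is adjacent to every vertex of corner rank k+1. -/

import Mathlib

namespace CopsRobbers

variable {V : Type*}

/-- The closed neighborhood of `v` within the vertex set `S` (graphs are reflexive,
so `v` itself belongs to its closed neighborhood). -/
def closedNbhd (G : SimpleGraph V) (S : Set V) (v : V) : Set V :=
  {u | u ∈ S ∧ (u = v ∨ G.Adj u v)}

/-- `v` is a strict corner of the subgraph induced on `S`: some other vertex `w ∈ S`
strictly corners `v`, i.e. `N[v] ⊊ N[w]` within `S`. -/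
def StrictCorner (G : SimpleGraph V) (S : Set V) (v : V) : Prop :=
  v ∈ S ∧ ∃ w ∈ S, w ≠ v ∧ closedNbhd G S v ⊂ closedNbhd G S w

/-- The remaining vertex sets of the corner ranking procedure (0-indexed auxiliary
version): at each step all current strict corners are removed. -/
def stageAux (G : SimpleGraph V) : ℕ → Set V
  | 0 => Set.univ
  | n + 1 => stageAux G n \ {v | StrictCorner G (stageAux G n) v}

/-- `stage G k` is the vertex set of `G^(k)` (for `k ≥ 1`), so `stage G 1 = V(G)`. -/
def stage (G : SimpleGraph V) (k : ℕ) : Set V := stageAux G (k - 1)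

/-- The corner rank of a vertex: the least `k ≥ 1` such that `v` is a strict corner
of `G^(k)`, or `G^(k)` is a clique still containing `v`; and `⊤` (that is, `∞`) if
there is no such `k`. -/
noncomputable def cornerRank (G : SimpleGraph V) (v : V) : ℕ∞ :=
  sInf {k : ℕ∞ | ∃ n : ℕ, k = (n : ℕ∞) ∧ 1 ≤ n ∧
    (StrictCorner G (stage G n) v ∨ (G.IsClique (stage G n) ∧ v ∈ stage G n))}

/-- The corner rank of a graph: the largest corner rank of a vertex. -/
noncomputable def graphRank (G : SimpleGraph V) : ℕ∞ := ⨆ v, cornerRank G v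

/-- A graph is cop-win iff every vertex has finite corner rank. -/
def CopWin (G : SimpleGraph V) : Prop := ∀ v, cornerRank G v ≠ ⊤

/-- `v` dominates the set `S`: `v` is (reflexively) adjacent to every vertex of `S`. -/
def Dominates (G : SimpleGraph V) (v : V) (S : Set V) : Prop :=
  ∀ u ∈ S, u = v ∨ G.Adj v u

/-- A cop-win graph of corner rank `α ≥ 2` is `tp1` if some vertex of corner rank `α`
dominates the vertex set of `G^(α-1)`. -/
def Tp1 (G : SimpleGraph V) : Prop :=
  ∃ α : ℕ, 2 ≤ α ∧ graphRank G = (α : ℕ∞) ∧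
    ∃ v, cornerRank G v = (α : ℕ∞) ∧ Dominates G v (stage G (α - 1))

/-- `G` realizes the vector `(x_α, …, x_1)` (written as the list `[x_α, …, x_1]`):
`G` is cop-win of corner rank `α` and for each `k`, `x_k` is the number of vertices
of corner rank `k`. -/
def Realizes (G : SimpleGraph V) (x : List ℕ) : Prop :=
  CopWin G ∧ graphRank G = (x.length : ℕ∞) ∧
  ∀ i : Fin x.length,
    x.get i = {v | cornerRank G v = ((x.length - (i : ℕ) : ℕ) : ℕ∞)}.ncard

/-- `G` r-realizes `x` (for `r ∈ {0,1}`): `G` realizes `x` and `G` is tp-r. -/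
def RRealizes (G : SimpleGraph V) (r : ℕ) (x : List ℕ) : Prop :=
  Realizes G x ∧ (Tp1 G ↔ r = 1)

/-- A vector is realizable if it is the rank cardinality vector of some finite cop-win graph. -/
def Realizable (x : List ℕ) : Prop :=
  ∃ (W : Type) (_ : Fintype W) (G : SimpleGraph W), Realizes G x

/-- A vector is r-realizable if some finite tp-r cop-win graph realizes it. -/
def RRealizable (r : ℕ) (x : List ℕ) : Prop :=
  ∃ (W : Type) (_ : Fintype W) (G : SimpleGraph W), RRealizes G r x

open Classical in
/-- The capture time of a cop-win graph: `cr(G) - r(G)`. -/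
noncomputable def captureTime (G : SimpleGraph V) : ℕ :=
  (graphRank G).toNat - (if Tp1 G then 1 else 0)

end CopsRobbers

/-!
A vertex `v` of corner rank `k > 1` survives into `G^(k)` because it is not a strict corner of
`G^(k-1)`. If `v` had no neighbor among the strict corners of `G^(k-1)` (the vertices of rank
`k-1`), its closed neighborhoods in `G^(k-1)` and in `G^(k)` would coincide. When `v` is a strict
corner of `G^(k)`, this makes it a strict corner of `G^(k-1)` already. When `G^(k)` is a clique,
a removed corner `z` with maximal neighborhood is strictly cornered by some `w` in the clique;
then `N[v] ⊆ G^(k) ⊆ N[w]`, so `N[v] = N[w]` as `v` is no strict corner, and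
`z ∈ N[w] ⊆ G^(k)`, a contradiction.
-/

namespace CopsRobbers

variable {V : Type*} {G : SimpleGraph V} {S T : Set V} {v w : V}

section ClosedNbhd

lemma self_mem_closedNbhd (hv : v ∈ S) : v ∈ closedNbhd G S v :=
  ⟨hv, Or.inl rfl⟩

lemma closedNbhd_eq_inter (hTS : T ⊆ S) (v : V) :
    closedNbhd G T v = closedNbhd G S v ∩ T := by
  ext u
  simp only [closedNbhd, Set.mem_ofPred_eq, Set.mem_inter_iff]
  exact ⟨fun ⟨hu, h⟩ => ⟨⟨hTS hu, h⟩, hu⟩, fun ⟨⟨_, h⟩, hu⟩ => ⟨hu, h⟩⟩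

lemma closedNbhd_subset_iff (hvT : v ∈ T) :
    closedNbhd G S v ⊆ T ↔ ∀ u ∈ S \ T, ¬ G.Adj v u := by
  constructor
  · rintro h u ⟨huS, huT⟩ hvu
    exact huT (h ⟨huS, Or.inr hvu.symm⟩)
  · rintro h u ⟨huS, rfl | huv⟩
    · exact hvT
    · by_contra huT
      exact h u ⟨huS, huT⟩ huv.symm

lemma subset_closedNbhd_of_isClique (hTS : T ⊆ S) (hT : G.IsClique T) (hw : w ∈ T) :
    T ⊆ closedNbhd G S w := fun u hu =>
  ⟨hTS hu, (eq_or_ne u w).imp_right fun huw => hT hu hw huw⟩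

lemma closedNbhd_eq_of_isClique (hS : G.IsClique S) (hv : v ∈ S) : closedNbhd G S v = S :=
  Set.Subset.antisymm (fun _ hu => hu.1) (subset_closedNbhd_of_isClique le_rfl hS hv)

lemma StrictCorner.not_isClique (h : StrictCorner G S v) : ¬ G.IsClique S := by
  intro hS
  obtain ⟨hv, w, hw, -, hvw⟩ := h
  rw [closedNbhd_eq_of_isClique hS hv, closedNbhd_eq_of_isClique hS hw] at hvw
  exact hvw.ne rfl

lemma closedNbhd_eq_of_not_strictCorner (hv : v ∈ S) (hw : w ∈ S) (h : ¬ StrictCorner G S v)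
    (hvw : closedNbhd G S v ⊆ closedNbhd G S w) : closedNbhd G S v = closedNbhd G S w := by
  rcases eq_or_ne w v with rfl | hwv
  · rfl
  · exact hvw.eq_of_not_ssubset fun hss => h ⟨hv, w, hw, hwv, hss⟩

end ClosedNbhd

section Pruning

lemma StrictCorner.of_closedNbhd_subset (hTS : T ⊆ S) (hvT : closedNbhd G S v ⊆ T)
    (h : StrictCorner G T v) : StrictCorner G S v := by
  obtain ⟨hv, w, hw, hwv, hss⟩ := h
  refine ⟨hTS hv, w, hTS hw, hwv, ?_⟩
  calc closedNbhd G S v = closedNbhd G T v := by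
        rw [closedNbhd_eq_inter hTS, Set.inter_eq_left.mpr hvT]
    _ ⊂ closedNbhd G T w := hss
    _ ⊆ closedNbhd G S w := by
        rw [closedNbhd_eq_inter hTS]
        exact Set.inter_subset_left

lemma exists_adj_mem_diff_of_strictCorner (hTS : T ⊆ S) (hv : ¬ StrictCorner G S v)
    (h : StrictCorner G T v) : ∃ u ∈ S \ T, G.Adj v u := by
  by_contra! hno
  exact hv (h.of_closedNbhd_subset hTS ((closedNbhd_subset_iff h.1).mpr hno))

lemma exists_adj_mem_diff_of_isClique (hS : S.Finite) (hTS : T ⊆ S) (hT : G.IsClique T)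
    (hcorner : ∀ x ∈ S \ T, StrictCorner G S x) (hne : (S \ T).Nonempty) (hvT : v ∈ T)
    (hv : ¬ StrictCorner G S v) : ∃ u ∈ S \ T, G.Adj v u := by
  by_contra! hno
  have hNv : closedNbhd G S v ⊆ T := (closedNbhd_subset_iff hvT).mpr hno
  obtain ⟨z, hz, hzmax⟩ :=
    Set.Finite.exists_maximalFor (closedNbhd G S) (S \ T) (hS.subset Set.sdiff_subset) hne
  obtain ⟨-, w, hwS, -, hzw⟩ := hcorner z hz
  have hwT : w ∈ T := by
    by_contra hwT
    exact hzw.not_subset (hzmax ⟨hwS, hwT⟩ hzw.subset)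
  have hNw : closedNbhd G S w ⊆ T := by
    have hvw := hNv.trans (subset_closedNbhd_of_isClique hTS hT hwT)
    rwa [← closedNbhd_eq_of_not_strictCorner (hTS hvT) hwS hv hvw]
  exact hz.2 (hNw (hzw.subset (self_mem_closedNbhd hz.1)))

end Pruning

section Stages

lemma stage_succ {n : ℕ} (hn : 1 ≤ n) :
    stage G (n + 1) = stage G n \ {x | StrictCorner G (stage G n) x} := by
  obtain ⟨m, rfl⟩ := Nat.exists_eq_add_of_le' hn
  rfl

lemma stage_anti : Antitone (stage G) := fun m n hmn =>
  (antitone_nat_of_succ_le fun _ => Set.sdiff_subset : Antitone (stageAux G)) (by omega)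

lemma not_strictCorner_of_mem_stage {m n : ℕ} (hn : 1 ≤ n) (hnm : n < m)
    (hv : v ∈ stage G m) : ¬ StrictCorner G (stage G n) v := by
  have hv' : v ∈ stage G (n + 1) := stage_anti hnm hv
  rw [stage_succ hn] at hv'
  exact hv'.2

lemma mem_stage_of_forall_not_strictCorner {m : ℕ}
    (h : ∀ n, 1 ≤ n → n < m → ¬ StrictCorner G (stage G n) v) : v ∈ stage G m := by
  induction m with
  | zero => trivial
  | succ m ih =>
    rcases Nat.eq_zero_or_pos m with rfl | hm
    · trivial
    · rw [stage_succ hm]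
      exact ⟨ih fun n hn hnm => h n hn (hnm.trans m.lt_succ_self), h m hm m.lt_succ_self⟩

end Stages

section CornerRank

/-- The condition under which the corner ranking procedure assigns rank `n` to `v`. -/
def IsRankedAt (G : SimpleGraph V) (n : ℕ) (v : V) : Prop :=
  StrictCorner G (stage G n) v ∨ (G.IsClique (stage G n) ∧ v ∈ stage G n)

lemma cornerRank_le {n : ℕ} (hn : 1 ≤ n) (h : IsRankedAt G n v) : cornerRank G v ≤ n :=
  sInf_le ⟨n, rfl, hn, h⟩

lemma not_isRankedAt_of_lt_cornerRank {n : ℕ} (hn : 1 ≤ n) (h : (n : ℕ∞) < cornerRank G v) :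
    ¬ IsRankedAt G n v := fun hr => (cornerRank_le hn hr).not_gt h

lemma isRankedAt_of_cornerRank_eq {k : ℕ} (h : cornerRank G v = k) :
    1 ≤ k ∧ IsRankedAt G k v := by
  have hne : {k : ℕ∞ | ∃ n : ℕ, k = n ∧ 1 ≤ n ∧ IsRankedAt G n v}.Nonempty := by
    by_contra hempty
    rw [Set.not_nonempty_iff_eq_empty] at hempty
    have htop : cornerRank G v = ⊤ := (congrArg sInf hempty).trans sInf_empty
    exact ENat.natCast_ne_top k (h.symm.trans htop)
  obtain ⟨n, hn, h1, hr⟩ := csInf_mem hne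
  obtain rfl : n = k := by exact_mod_cast hn.symm.trans h
  exact ⟨h1, hr⟩

lemma mem_stage_of_cornerRank_eq {k : ℕ} (h : cornerRank G v = k) : v ∈ stage G k :=
  mem_stage_of_forall_not_strictCorner fun n hn hnk hc =>
    not_isRankedAt_of_lt_cornerRank hn (h ▸ by exact_mod_cast hnk) (Or.inl hc)

lemma cornerRank_eq_of_strictCorner {m : ℕ} (hm : 1 ≤ m) (h : StrictCorner G (stage G m) v) :
    cornerRank G v = m := by
  refine (cornerRank_le hm (Or.inl h)).antisymm (le_sInf ?_)
  rintro _ ⟨n, rfl, hn, hr⟩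
  by_contra! hnm
  have hnm : n < m := by exact_mod_cast hnm
  rcases hr with hc | ⟨hcl, -⟩
  · exact not_strictCorner_of_mem_stage hn hnm h.1 hc
  · exact h.not_isClique (hcl.subset (stage_anti hnm.le))

lemma exists_adj_cornerRank_eq [Finite V] {n : ℕ} (hn : 1 ≤ n)
    (hv : cornerRank G v = (n + 1 : ℕ)) : ∃ u, G.Adj v u ∧ cornerRank G u = n := by
  set S := stage G n
  have hTS : stage G (n + 1) ⊆ S := stage_anti n.le_succ
  have hcorner : ∀ x ∈ S \ stage G (n + 1), StrictCorner G S x := by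
    rw [stage_succ hn]
    rintro x ⟨hxS, hx⟩
    by_contra hc
    exact hx ⟨hxS, hc⟩
  have hvT : v ∈ stage G (n + 1) := mem_stage_of_cornerRank_eq hv
  have hnot : ¬ IsRankedAt G n v :=
    not_isRankedAt_of_lt_cornerRank hn (by rw [hv]; exact_mod_cast n.lt_succ_self)
  have hvS : ¬ StrictCorner G S v := fun hc => hnot (Or.inl hc)
  have hadj : ∃ u ∈ S \ stage G (n + 1), G.Adj v u := by
    rcases (isRankedAt_of_cornerRank_eq hv).2 with hc | ⟨hcl, -⟩
    · exact exists_adj_mem_diff_of_strictCorner hTS hvS hc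
    · have hne : (S \ stage G (n + 1)).Nonempty :=
        Set.sdiff_nonempty.mpr fun hST => hnot (Or.inr ⟨hcl.subset hST, hTS hvT⟩)
      exact exists_adj_mem_diff_of_isClique S.toFinite hTS hcl hcorner hne hvT hvS
  obtain ⟨u, hu, hvu⟩ := hadj
  exact ⟨u, hvu, cornerRank_eq_of_strictCorner hn (hcorner u hu)⟩

end CornerRank

end CopsRobbers

theorem CopsRobbers.neighbor_of_rank_pred_general
    {V : Type} [Fintype V] (G : SimpleGraph V) (α : ℕ) :
    (∀ (k : ℕ) (v : V), 1 < k → CopsRobbers.cornerRank G v = (k : ℕ∞) →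
      ∃ u, G.Adj v u ∧ CopsRobbers.cornerRank G u = ((k - 1 : ℕ) : ℕ∞)) ∧
    (∀ (k : ℕ) (v : V), k < α →
      {u | CopsRobbers.cornerRank G u = (k : ℕ∞)} = {v} →
      ∀ u, CopsRobbers.cornerRank G u = ((k + 1 : ℕ) : ℕ∞) → G.Adj v u) := by
  refine ⟨fun k v hk hv => ?_, fun k v _ hrank u hu => ?_⟩
  · obtain ⟨n, rfl⟩ : ∃ n, k = n + 1 := ⟨k - 1, by omega⟩
    exact CopsRobbers.exists_adj_cornerRank_eq (by omega) hv
  · have hv : v ∈ {u | CopsRobbers.cornerRank G u = k} := hrank ▸ Set.mem_singleton v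
    obtain ⟨w, huw, hw⟩ :=
      CopsRobbers.exists_adj_cornerRank_eq (CopsRobbers.isRankedAt_of_cornerRank_eq hv).1 hu
    obtain rfl : w = v := hrank.subset hw
    exact huw.symm

/-- in a cop-win graph of corner rank `α`, every vertex of corner rank
`k > 1` has a neighbor of corner rank `k - 1`; in particular, if for some `k < α`
there is exactly one vertex `v` of corner rank `k`, then `v` is adjacent to every
vertex of corner rank `k + 1`. -/
theorem CopsRobbers.neighbor_of_rank_pred
    {V : Type} [Fintype V] (G : SimpleGraph V) (α : ℕ)
    (hG : CopsRobbers.CopWin G) (hα : CopsRobbers.graphRank G = (α : ℕ∞)) :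
    (∀ (k : ℕ) (v : V), 1 < k → CopsRobbers.cornerRank G v = (k : ℕ∞) →
      ∃ u, G.Adj v u ∧ CopsRobbers.cornerRank G u = ((k - 1 : ℕ) : ℕ∞)) ∧
    (∀ (k : ℕ) (v : V), k < α →
      {u | CopsRobbers.cornerRank G u = (k : ℕ∞)} = {v} →
      ∀ u, CopsRobbers.cornerRank G u = ((k + 1 : ℕ) : ℕ∞) → G.Adj v u) :=
  CopsRobbers.neighbor_of_rank_pred_general G α
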